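/- For every s ∈ I with s ≠ 1, 2, the double derivation Tr(E_s) on the fusion algebra A^f equals the gauge element F_s of A^f: Tr(E_s)(a) = a e_s ⊗ e_s − e_s ⊗ e_s a for all a ∈ A^f. -/

import Mathlib

open TensorProduct

/-- A double bracket on a `k`-algebra `A` (Van den Bergh): a bilinear map
`A × A → A ⊗ A` which is cyclically antisymmetric and a derivation in its second
argument for the outer bimodule structure on `A ⊗ A`. -/
structure DoubleBracket (k A : Type*) [CommRing k] [Ring A] [Algebra k A] where
  br : A →ₗ[k] A →ₗ[k] A ⊗[k] A
  antisymm : ∀ a b : A, br a b = - (TensorProduct.comm k A A) (br b a)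
  deriv : ∀ a b c : A,
    br a (b * c) = br a b * ((1 : A) ⊗ₜ[k] c) + (b ⊗ₜ[k] (1 : A)) * br a c

section Core

variable (k : Type*) [CommRing k] (A : Type*) [Ring A] [Algebra k A]

/-- The cyclic permutation `x ⊗ y ⊗ z ↦ z ⊗ x ⊗ y` on the triple tensor product. -/
noncomputable def cyc3 : A ⊗[k] (A ⊗[k] A) ≃ₗ[k] A ⊗[k] (A ⊗[k] A) :=
  (TensorProduct.assoc k A A A).symm.trans (TensorProduct.comm k (A ⊗[k] A) A)

variable {k A}

/-- Apply a double bracket (as a bilinear map) to the first tensor factor,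
`x ⊗ y ↦ ⟪a, x⟫ ⊗ y`. -/
noncomputable def leftExtOf (br : A →ₗ[k] A →ₗ[k] A ⊗[k] A) (a : A) :
    A ⊗[k] A →ₗ[k] A ⊗[k] (A ⊗[k] A) :=
  (TensorProduct.assoc k A A A).toLinearMap.comp (TensorProduct.map (br a) LinearMap.id)

/-- The triple bracket associated to (the underlying bilinear map of) a double bracket:
`⟪a,b,c⟫ = ⟪a,⟪b,c⟫'⟫ ⊗ ⟪b,c⟫'' + τ(⟪b,⟪c,a⟫'⟫ ⊗ ⟪c,a⟫'') + τ²(⟪c,⟪a,b⟫'⟫ ⊗ ⟪a,b⟫'')`. -/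
noncomputable def tripleOf (br : A →ₗ[k] A →ₗ[k] A ⊗[k] A) (a b c : A) :
    A ⊗[k] (A ⊗[k] A) :=
  leftExtOf br a (br b c) + cyc3 k A (leftExtOf br b (br c a))
    + cyc3 k A (cyc3 k A (leftExtOf br c (br a b)))

/-- The triple bracket associated to a double bracket. -/
noncomputable def DoubleBracket.triple (D : DoubleBracket k A) (a b c : A) :
    A ⊗[k] (A ⊗[k] A) :=
  tripleOf D.br a b c

end Core

/-- A double bracket is quasi-Poisson over the ground field `k` (i.e. with respect to
the trivial idempotent decomposition `1 = 1`). -/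
def DoubleBracket.IsQuasiPoisson {k A : Type*} [Field k] [Ring A] [Algebra k A]
    (D : DoubleBracket k A) : Prop :=
  ∀ a b c : A, D.triple a b c = (4⁻¹ : k) •
    ((c * a) ⊗ₜ[k] (b ⊗ₜ[k] (1 : A)) - (c * a) ⊗ₜ[k] ((1 : A) ⊗ₜ[k] b)
      - c ⊗ₜ[k] ((a * b) ⊗ₜ[k] (1 : A)) + c ⊗ₜ[k] (a ⊗ₜ[k] b)
      - a ⊗ₜ[k] (b ⊗ₜ[k] c) + a ⊗ₜ[k] ((1 : A) ⊗ₜ[k] (b * c))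
      + (1 : A) ⊗ₜ[k] ((a * b) ⊗ₜ[k] c) - (1 : A) ⊗ₜ[k] (a ⊗ₜ[k] (b * c)))

section Fusion

variable (k : Type*) [Field k] (A : Type*) [Ring A] [Algebra k A]

/-- Relations presenting the extension algebra `Ā = A *_B B̄`, where `B̄ = Mat₂(k) ⊕ kμ`:
`Ā` is generated by the elements of `A` together with two new generators `e₁₂, e₂₁`
subject to `e₁₂e₂₁ = e₁`, `e₂₁e₁₂ = e₂`, `e₁e₁₂ = e₁₂ = e₁₂e₂`, `e₂e₂₁ = e₂₁ = e₂₁e₁`. -/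
inductive FusionRel (e1 e2 : A) :
    FreeAlgebra k (A ⊕ Fin 2) → FreeAlgebra k (A ⊕ Fin 2) → Prop
  | add (a b : A) : FusionRel e1 e2
      (FreeAlgebra.ι k (Sum.inl a) + FreeAlgebra.ι k (Sum.inl b))
      (FreeAlgebra.ι k (Sum.inl (a + b)))
  | smul (c : k) (a : A) : FusionRel e1 e2
      (c • FreeAlgebra.ι k (Sum.inl a)) (FreeAlgebra.ι k (Sum.inl (c • a)))
  | mul (a b : A) : FusionRel e1 e2
      (FreeAlgebra.ι k (Sum.inl a) * FreeAlgebra.ι k (Sum.inl b))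
      (FreeAlgebra.ι k (Sum.inl (a * b)))
  | one : FusionRel e1 e2 (FreeAlgebra.ι k (Sum.inl 1)) 1
  | mul1221 : FusionRel e1 e2
      (FreeAlgebra.ι k (Sum.inr 0) * FreeAlgebra.ι k (Sum.inr 1))
      (FreeAlgebra.ι k (Sum.inl e1))
  | mul2112 : FusionRel e1 e2
      (FreeAlgebra.ι k (Sum.inr 1) * FreeAlgebra.ι k (Sum.inr 0))
      (FreeAlgebra.ι k (Sum.inl e2))
  | e1mul12 : FusionRel e1 e2
      (FreeAlgebra.ι k (Sum.inl e1) * FreeAlgebra.ι k (Sum.inr 0))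
      (FreeAlgebra.ι k (Sum.inr 0))
  | mul12e2 : FusionRel e1 e2
      (FreeAlgebra.ι k (Sum.inr 0) * FreeAlgebra.ι k (Sum.inl e2))
      (FreeAlgebra.ι k (Sum.inr 0))
  | e2mul21 : FusionRel e1 e2
      (FreeAlgebra.ι k (Sum.inl e2) * FreeAlgebra.ι k (Sum.inr 1))
      (FreeAlgebra.ι k (Sum.inr 1))
  | mul21e1 : FusionRel e1 e2
      (FreeAlgebra.ι k (Sum.inr 1) * FreeAlgebra.ι k (Sum.inl e1))
      (FreeAlgebra.ι k (Sum.inr 1))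

/-- The extension algebra `Ā = A *_B B̄` of `A` along the pair of idempotents
`(e1, e2)`. -/
abbrev ExtAlg (e1 e2 : A) := RingQuot (FusionRel k A e1 e2)

variable (e1 e2 : A)

/-- The canonical map `A → Ā`. -/
noncomputable def extι : A →ₐ[k] ExtAlg k A e1 e2 where
  toFun a := RingQuot.mkAlgHom k (FusionRel k A e1 e2) (FreeAlgebra.ι k (Sum.inl a))
  map_one' := by
    simpa using RingQuot.mkAlgHom_rel k
      (FusionRel.one (k := k) (A := A) (e1 := e1) (e2 := e2))
  map_mul' a b := by
    have h := RingQuot.mkAlgHom_rel k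
      (FusionRel.mul (k := k) (A := A) (e1 := e1) (e2 := e2) a b)
    rw [map_mul] at h
    exact h.symm
  map_zero' := by
    have h := RingQuot.mkAlgHom_rel k
      (FusionRel.smul (k := k) (A := A) (e1 := e1) (e2 := e2) 0 1)
    rw [map_smul, zero_smul, zero_smul] at h
    exact h.symm
  map_add' a b := by
    have h := RingQuot.mkAlgHom_rel k
      (FusionRel.add (k := k) (A := A) (e1 := e1) (e2 := e2) a b)
    rw [map_add] at h
    exact h.symm
  commutes' c := by
    have h := RingQuot.mkAlgHom_rel k
      (FusionRel.smul (k := k) (A := A) (e1 := e1) (e2 := e2) c 1)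
    have h1 : (RingQuot.mkAlgHom k (FusionRel k A e1 e2))
        (FreeAlgebra.ι k (Sum.inl (1 : A))) = 1 := by
      simpa using RingQuot.mkAlgHom_rel k
        (FusionRel.one (k := k) (A := A) (e1 := e1) (e2 := e2))
    rw [map_smul, h1] at h
    rw [Algebra.algebraMap_eq_smul_one, Algebra.algebraMap_eq_smul_one]
    exact h.symm

/-- The matrix unit `e₁₂ ∈ Ā`. -/
noncomputable def ext12 : ExtAlg k A e1 e2 :=
  RingQuot.mkAlgHom k (FusionRel k A e1 e2) (FreeAlgebra.ι k (Sum.inr 0))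

/-- The matrix unit `e₂₁ ∈ Ā`. -/
noncomputable def ext21 : ExtAlg k A e1 e2 :=
  RingQuot.mkAlgHom k (FusionRel k A e1 e2) (FreeAlgebra.ι k (Sum.inr 1))

/-- The idempotent `ε = 1 − e₂ ∈ Ā`; the fusion algebra is the corner
`A^f = ε Ā ε`. -/
noncomputable def extEps : ExtAlg k A e1 e2 := 1 - extι k A e1 e2 e2

variable {k A e1 e2}

/-- Membership in the fusion algebra `A^f = ε Ā ε ⊆ Ā`. -/
def InCorner (x : ExtAlg k A e1 e2) : Prop :=
  extEps k A e1 e2 * x * extEps k A e1 e2 = x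

end Fusion

/-- The data of a double bracket on the corner algebra `A^f = ε Ā ε` (whose unit is
`ε`), recorded as a bilinear map on `Ā`: it is cyclically antisymmetric, satisfies the
derivation rule on corner elements, and takes corner values on corner elements. -/
structure CornerDoubleBracket (k R : Type*) [Field k] [Ring R] [Algebra k R]
    (ε : R) where
  br : R →ₗ[k] R →ₗ[k] R ⊗[k] R
  antisymm : ∀ a b : R, br a b = - (TensorProduct.comm k R R) (br b a)
  deriv : ∀ a b c : R, ε * a * ε = a → ε * b * ε = b → ε * c * ε = c →
    br a (b * c) = br a b * ((1 : R) ⊗ₜ[k] c) + (b ⊗ₜ[k] (1 : R)) * br a c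
  corner_val : ∀ a b : R, ε * a * ε = a → ε * b * ε = b →
    br a b = (ε ⊗ₜ[k] ε) * br a b * (ε ⊗ₜ[k] ε)

section GaugeTr

variable {k : Type*} [Field k] {A : Type*} [Ring A] [Algebra k A] {e1 e2 : A}

/-- The property of being (the extension to `Ā` of) the gauge element `E_s`: a double
derivation of `Ā` vanishing on `B̄` and given on `A` by
`E_s(a) = a e_s ⊗ e_s − e_s ⊗ e_s a`. -/
structure IsGaugeExt (es : A) (δ : ExtAlg k A e1 e2 →ₗ[k]
    ExtAlg k A e1 e2 ⊗[k] ExtAlg k A e1 e2) : Prop where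
  leib : ∀ x y : ExtAlg k A e1 e2,
    δ (x * y) = δ x * ((1 : ExtAlg k A e1 e2) ⊗ₜ[k] y)
      + (x ⊗ₜ[k] (1 : ExtAlg k A e1 e2)) * δ y
  on_A : ∀ a : A, δ (extι k A e1 e2 a) =
    (extι k A e1 e2 (a * es)) ⊗ₜ[k] (extι k A e1 e2 es)
      - (extι k A e1 e2 es) ⊗ₜ[k] (extι k A e1 e2 (es * a))
  on_e12 : δ (ext12 k A e1 e2) = 0
  on_e21 : δ (ext21 k A e1 e2) = 0

/-- The trace map on double derivations:
`Tr(δ)(a) = δ(a)'ε ⊗ εδ(a)'' + δ(a)'e₂₁ε ⊗ εe₁₂δ(a)''`. -/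
noncomputable def TrOf (δ : ExtAlg k A e1 e2 →ₗ[k]
    ExtAlg k A e1 e2 ⊗[k] ExtAlg k A e1 e2) :
    ExtAlg k A e1 e2 →ₗ[k] ExtAlg k A e1 e2 ⊗[k] ExtAlg k A e1 e2 :=
  (TensorProduct.map (LinearMap.mulRight k (extEps k A e1 e2))
      (LinearMap.mulLeft k (extEps k A e1 e2))).comp δ
    + (TensorProduct.map
        (LinearMap.mulRight k (ext21 k A e1 e2 * extEps k A e1 e2))
        (LinearMap.mulLeft k (extEps k A e1 e2 * ext12 k A e1 e2))).comp δ

end GaugeTr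

/-!
Extending `E_s` to `Ā` gives a double derivation that agrees with `x ↦ x e_s ⊗ e_s − e_s ⊗ e_s x`
on `A`, and both vanish on `e₁₂, e₂₁` because `e_s` is orthogonal to `e₁` and `e₂`; since `A`,
`e₁₂, e₂₁` generate `Ā`, the two coincide. In `Tr`, the factors `ε = 1 − e₂` act trivially on
`e_s`, and the correction term through `e₂₁ε ⊗ εe₁₂` vanishes since `e_s e₂₁ = 0 = e₁₂ e_s`.
-/

section DoubleDerivation

variable {k : Type*} [CommRing k] {R : Type*} [Ring R] [Algebra k R]

def IsDoubleDerivation (δ : R →ₗ[k] R ⊗[k] R) : Prop :=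
  ∀ x y : R, δ (x * y) = δ x * ((1 : R) ⊗ₜ[k] y) + (x ⊗ₜ[k] (1 : R)) * δ y

variable (k) in
noncomputable def gaugeDoubleDer (S : R) : R →ₗ[k] R ⊗[k] R :=
  (TensorProduct.mk k R R).flip S ∘ₗ LinearMap.mulRight k S
    - TensorProduct.mk k R R S ∘ₗ LinearMap.mulLeft k S

theorem gaugeDoubleDer_apply (S x : R) :
    gaugeDoubleDer k S x = (x * S) ⊗ₜ[k] S - S ⊗ₜ[k] (S * x) :=
  rfl

theorem isDoubleDerivation_gaugeDoubleDer (S : R) :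
    IsDoubleDerivation (gaugeDoubleDer k S) := by
  intro x y
  simp only [gaugeDoubleDer_apply, sub_mul, mul_sub, Algebra.TensorProduct.tmul_mul_tmul,
    one_mul, mul_one, mul_assoc]
  abel

end DoubleDerivation

section ExtensionAlgebra

variable {k : Type*} [Field k] {A : Type*} [Ring A] [Algebra k A] {e1 e2 : A}

theorem extι_mul_ext12 : extι k A e1 e2 e1 * ext12 k A e1 e2 = ext12 k A e1 e2 :=
  (map_mul _ _ _).symm.trans (RingQuot.mkAlgHom_rel k FusionRel.e1mul12)

theorem ext12_mul_extι : ext12 k A e1 e2 * extι k A e1 e2 e2 = ext12 k A e1 e2 :=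
  (map_mul _ _ _).symm.trans (RingQuot.mkAlgHom_rel k FusionRel.mul12e2)

theorem extι_mul_ext21 : extι k A e1 e2 e2 * ext21 k A e1 e2 = ext21 k A e1 e2 :=
  (map_mul _ _ _).symm.trans (RingQuot.mkAlgHom_rel k FusionRel.e2mul21)

theorem ext21_mul_extι : ext21 k A e1 e2 * extι k A e1 e2 e1 = ext21 k A e1 e2 :=
  (map_mul _ _ _).symm.trans (RingQuot.mkAlgHom_rel k FusionRel.mul21e1)

theorem extι_mul_ext12_eq_zero {b : A} (h : b * e1 = 0) :
    extι k A e1 e2 b * ext12 k A e1 e2 = 0 := by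
  rw [← extι_mul_ext12, ← mul_assoc, ← map_mul, h, map_zero, zero_mul]

theorem ext12_mul_extι_eq_zero {b : A} (h : e2 * b = 0) :
    ext12 k A e1 e2 * extι k A e1 e2 b = 0 := by
  rw [← ext12_mul_extι, mul_assoc, ← map_mul, h, map_zero, mul_zero]

theorem extι_mul_ext21_eq_zero {b : A} (h : b * e2 = 0) :
    extι k A e1 e2 b * ext21 k A e1 e2 = 0 := by
  rw [← extι_mul_ext21, ← mul_assoc, ← map_mul, h, map_zero, zero_mul]

theorem ext21_mul_extι_eq_zero {b : A} (h : e1 * b = 0) :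
    ext21 k A e1 e2 * extι k A e1 e2 b = 0 := by
  rw [← ext21_mul_extι, mul_assoc, ← map_mul, h, map_zero, mul_zero]

theorem extι_mul_extEps {b : A} (h : b * e2 = 0) :
    extι k A e1 e2 b * extEps k A e1 e2 = extι k A e1 e2 b := by
  rw [extEps, mul_sub, mul_one, ← map_mul, h, map_zero, sub_zero]

theorem extEps_mul_extι {b : A} (h : e2 * b = 0) :
    extEps k A e1 e2 * extι k A e1 e2 b = extι k A e1 e2 b := by
  rw [extEps, sub_mul, one_mul, ← map_mul, h, map_zero, sub_zero]

theorem ExtAlg.induction {P : ExtAlg k A e1 e2 → Prop}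
    (extι_mem : ∀ a : A, P (extι k A e1 e2 a)) (ext12_mem : P (ext12 k A e1 e2))
    (ext21_mem : P (ext21 k A e1 e2)) (add_mem : ∀ x y, P x → P y → P (x + y))
    (mul_mem : ∀ x y, P x → P y → P (x * y)) (x : ExtAlg k A e1 e2) : P x := by
  obtain ⟨z, rfl⟩ := RingQuot.mkAlgHom_surjective k (FusionRel k A e1 e2) x
  induction z using FreeAlgebra.induction with
  | grade0 c =>
    rw [AlgHom.commutes, ← (extι k A e1 e2).commutes]
    exact extι_mem _
  | grade1 g =>
    rcases g with a | j
    · exact extι_mem a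
    · fin_cases j
      exacts [ext12_mem, ext21_mem]
  | mul z w hz hw => rw [map_mul]; exact mul_mem _ _ hz hw
  | add z w hz hw => rw [map_add]; exact add_mem _ _ hz hw

theorem ExtAlg.doubleDerivation_ext {δ δ' : ExtAlg k A e1 e2 →ₗ[k]
      ExtAlg k A e1 e2 ⊗[k] ExtAlg k A e1 e2}
    (hδ : IsDoubleDerivation δ) (hδ' : IsDoubleDerivation δ')
    (h_extι : ∀ a : A, δ (extι k A e1 e2 a) = δ' (extι k A e1 e2 a))
    (h12 : δ (ext12 k A e1 e2) = δ' (ext12 k A e1 e2))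
    (h21 : δ (ext21 k A e1 e2) = δ' (ext21 k A e1 e2)) : δ = δ' := by
  ext x
  induction x using ExtAlg.induction with
  | extι_mem a => exact h_extι a
  | ext12_mem => exact h12
  | ext21_mem => exact h21
  | add_mem x y hx hy => rw [map_add, map_add, hx, hy]
  | mul_mem x y hx hy => rw [hδ, hδ', hx, hy]

theorem IsGaugeExt.eq_gaugeDoubleDer {es : A} {δ : ExtAlg k A e1 e2 →ₗ[k]
      ExtAlg k A e1 e2 ⊗[k] ExtAlg k A e1 e2} (hδ : IsGaugeExt es δ)
    (hs_e1 : es * e1 = 0) (he1_s : e1 * es = 0) (hs_e2 : es * e2 = 0) (he2_s : e2 * es = 0) :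
    δ = gaugeDoubleDer k (extι k A e1 e2 es) := by
  refine ExtAlg.doubleDerivation_ext hδ.leib (isDoubleDerivation_gaugeDoubleDer _)
    (fun a => ?_) ?_ ?_
  · rw [hδ.on_A, gaugeDoubleDer_apply, map_mul, map_mul]
  · rw [hδ.on_e12, gaugeDoubleDer_apply, ext12_mul_extι_eq_zero he2_s,
      extι_mul_ext12_eq_zero hs_e1, zero_tmul, tmul_zero, sub_zero]
  · rw [hδ.on_e21, gaugeDoubleDer_apply, ext21_mul_extι_eq_zero he1_s,
      extι_mul_ext21_eq_zero hs_e2, zero_tmul, tmul_zero, sub_zero]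

theorem TrOf_gaugeDoubleDer {S : ExtAlg k A e1 e2}
    (hSε : S * extEps k A e1 e2 = S) (hεS : extEps k A e1 e2 * S = S)
    (hS21 : S * ext21 k A e1 e2 = 0) (h12S : ext12 k A e1 e2 * S = 0) (x : ExtAlg k A e1 e2) :
    TrOf (gaugeDoubleDer k S) x = gaugeDoubleDer k S x := by
  have hεS' (y : ExtAlg k A e1 e2) : extEps k A e1 e2 * (S * y) = S * y := by
    rw [← mul_assoc, hεS]
  have hS21' (y : ExtAlg k A e1 e2) : S * (ext21 k A e1 e2 * y) = 0 := by
    rw [← mul_assoc, hS21, zero_mul]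
  have h12S' (y : ExtAlg k A e1 e2) : ext12 k A e1 e2 * (S * y) = 0 := by
    rw [← mul_assoc, h12S, zero_mul]
  simp only [TrOf, LinearMap.add_apply, LinearMap.comp_apply, gaugeDoubleDer_apply, map_sub,
    map_tmul, LinearMap.mulRight_apply, LinearMap.mulLeft_apply, mul_assoc, hSε, hεS, hεS',
    hS21', h12S, h12S', mul_zero, zero_tmul, sub_self, add_zero]

end ExtensionAlgebra

theorem statement9_general (k : Type*) [Field k]
    (A : Type*) [Ring A] [Algebra k A]
    (I : Type*) [DecidableEq I] (e : I → A)
    (horth : ∀ s t : I, e s * e t = if s = t then e s else 0)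
    (i1 i2 : I)
    (s : I) (hs1 : s ≠ i1) (hs2 : s ≠ i2)
    (Es : ExtAlg k A (e i1) (e i2) →ₗ[k]
      ExtAlg k A (e i1) (e i2) ⊗[k] ExtAlg k A (e i1) (e i2))
    (hEs : IsGaugeExt (e s) Es) :
    ∀ a : ExtAlg k A (e i1) (e i2), InCorner a →
      TrOf Es a = (a * extι k A (e i1) (e i2) (e s)) ⊗ₜ[k] (extι k A (e i1) (e i2) (e s))
        - (extι k A (e i1) (e i2) (e s)) ⊗ₜ[k] (extι k A (e i1) (e i2) (e s) * a) := by
  intro a _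
  have hs_e1 : e s * e i1 = 0 := by rw [horth, if_neg hs1]
  have he1_s : e i1 * e s = 0 := by rw [horth, if_neg hs1.symm]
  have hs_e2 : e s * e i2 = 0 := by rw [horth, if_neg hs2]
  have he2_s : e i2 * e s = 0 := by rw [horth, if_neg hs2.symm]
  rw [hEs.eq_gaugeDoubleDer hs_e1 he1_s hs_e2 he2_s,
    TrOf_gaugeDoubleDer (extι_mul_extEps hs_e2) (extEps_mul_extι he2_s)
      (extι_mul_ext21_eq_zero hs_e2) (ext12_mul_extι_eq_zero he2_s), gaugeDoubleDer_apply]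

/-- For `s ≠ 1, 2`, the double derivation `Tr(E_s)` on the fusion
algebra `A^f = εĀε` equals the gauge element `F_s` of `A^f`:
`Tr(E_s)(a) = a e_s ⊗ e_s − e_s ⊗ e_s a` for all `a ∈ A^f`. -/
theorem statement9 (k : Type*) [Field k] [CharZero k]
    (A : Type*) [Ring A] [Algebra k A]
    (I : Type*) [Fintype I] [DecidableEq I] (e : I → A)
    (horth : ∀ s t : I, e s * e t = if s = t then e s else 0)
    (hsum : ∑ s : I, e s = 1)
    (i1 i2 : I) (h12 : i1 ≠ i2)
    (s : I) (hs1 : s ≠ i1) (hs2 : s ≠ i2)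
    (Es : ExtAlg k A (e i1) (e i2) →ₗ[k]
      ExtAlg k A (e i1) (e i2) ⊗[k] ExtAlg k A (e i1) (e i2))
    (hEs : IsGaugeExt (e s) Es) :
    ∀ a : ExtAlg k A (e i1) (e i2), InCorner a →
      TrOf Es a = (a * extι k A (e i1) (e i2) (e s)) ⊗ₜ[k] (extι k A (e i1) (e i2) (e s))
        - (extι k A (e i1) (e i2) (e s)) ⊗ₜ[k] (extι k A (e i1) (e i2) (e s) * a) :=
  statement9_general k A I e horth i1 i2 s hs1 hs2 Es hEs
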